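/- arXiv:2408.16636 — 6 statements merged into one kernel-verified Lean document; each statement's English description precedes it below -/
import Mathlib

section
/- Let ℓ be a unit vector in ℝ^d with e_i · ℓ ≥ 0 for all i and r = e_d · ℓ = max_i e_i · ℓ. For h ∈ ℝ, define U_h (resp. L_h) as the set of lattice vertices incident to an edge whose open interior intersects {x : x·ℓ ≥ h} (resp. is contained in {x : x·ℓ < h}). Then the vertex boundary VertBdry_h := V(U_h) ∩ V(L_h) equals exactly the set of v ∈ ℤ^d with v·ℓ ∈ (h − r, h]. -/
/-!
Statement 0: For a unit vector ℓ with the axes ordering convention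
(eᵢ·ℓ ≥ 0 for all i, r = e_d·ℓ maximal), the vertex boundary
VertBdry_h = V(U_h) ∩ V(L_h) equals {v ∈ ℤ^d : v·ℓ ∈ (h − r, h]}.
-/

variable {d : ℕ}

/-- Nearest-neighbour adjacency in ℤ^d. -/
def adjZ (v w : Fin d → ℤ) : Prop := (∑ i, |v i - w i|) = 1

/-- Height x·ℓ of a lattice vertex. -/
noncomputable def dotl (v : Fin d → ℤ) (l : Fin d → ℝ) : ℝ := ∑ i, (v i : ℝ) * l i

/-- Height of a point of ℝ^d. -/
noncomputable def heightR (l : Fin d → ℝ) (z : Fin d → ℝ) : ℝ := ∑ i, z i * l i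

/-- Open interior of the edge joining x and y, as a subset of ℝ^d. -/
def edgeInterior (x y : Fin d → ℤ) : Set (Fin d → ℝ) :=
  {z | ∃ t : ℝ, t ∈ Set.Ioo (0 : ℝ) 1 ∧
    z = fun i => t * (x i : ℝ) + (1 - t) * (y i : ℝ)}

/-- v is a vertex of the upper half-space subgraph U_h: it is an endpoint of an
edge whose interior meets {x : x·ℓ ≥ h}. -/
def memVU (l : Fin d → ℝ) (h : ℝ) (v : Fin d → ℤ) : Prop :=
  ∃ w, adjZ v w ∧ ∃ z ∈ edgeInterior v w, h ≤ heightR l z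

/-- v is a vertex of the lower half-space subgraph L_h: it is an endpoint of an
edge whose interior lies in {x : x·ℓ < h}. -/
def memVL (l : Fin d → ℝ) (h : ℝ) (v : Fin d → ℤ) : Prop :=
  ∃ w, adjZ v w ∧ ∀ z ∈ edgeInterior v w, heightR l z < h

lemma height_lin (l : Fin d → ℝ) (x y : Fin d → ℤ) (t : ℝ) :
    heightR l (fun i => t * (x i : ℝ) + (1 - t) * (y i : ℝ)) =
      t * dotl x l + (1 - t) * dotl y l := by
  simp only [heightR, dotl, Finset.mul_sum, ← Finset.sum_add_distrib]
  exact Finset.sum_congr rfl fun i _ => by ring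

lemma dotl_diff_le (l : Fin d → ℝ) (i0 : Fin d) (hnn : ∀ i, 0 ≤ l i)
    (hmax : ∀ i, l i ≤ l i0) {v w : Fin d → ℤ} (hadj : adjZ v w) :
    |dotl w l - dotl v l| ≤ l i0 := by
  have h1 : dotl w l - dotl v l = ∑ i, ((w i : ℝ) - (v i : ℝ)) * l i := by
    simp only [dotl, ← Finset.sum_sub_distrib]
    exact Finset.sum_congr rfl fun i _ => by ring
  have hsum : (∑ i, |(w i : ℝ) - (v i : ℝ)|) = 1 := by
    have : ((∑ i, |v i - w i| : ℤ) : ℝ) = 1 := by rw [hadj]; norm_num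
    push_cast at this
    rw [← this]
    exact Finset.sum_congr rfl fun i _ => by rw [abs_sub_comm]
  rw [h1]
  calc |∑ i, ((w i : ℝ) - (v i : ℝ)) * l i|
      ≤ ∑ i, |((w i : ℝ) - (v i : ℝ)) * l i| := Finset.abs_sum_le_sum_abs _ _
    _ ≤ ∑ i, |(w i : ℝ) - (v i : ℝ)| * l i0 := by
        refine Finset.sum_le_sum fun i _ => ?_
        rw [abs_mul, abs_of_nonneg (hnn i)]
        exact mul_le_mul_of_nonneg_left (hmax i) (abs_nonneg _)
    _ = (∑ i, |(w i : ℝ) - (v i : ℝ)|) * l i0 := (Finset.sum_mul _ _ _).symm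
    _ = l i0 := by rw [hsum, one_mul]

lemma adj_step (v : Fin d → ℤ) (i0 : Fin d) (c : ℤ) (hc : |c| = 1) :
    adjZ v (fun i => v i + if i = i0 then c else 0) := by
  simp only [adjZ]
  have key : ∀ i, |v i - (v i + if i = i0 then c else 0)| = if i = i0 then 1 else 0 := by
    intro i; split <;> simp [hc]
  rw [Finset.sum_congr rfl fun i _ => key i]
  simp

lemma dotl_step (v : Fin d → ℤ) (l : Fin d → ℝ) (i0 : Fin d) (c : ℤ) :
    dotl (fun i => v i + if i = i0 then c else 0) l = dotl v l + c * l i0 := by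
  simp only [dotl]
  have key : ∀ i, ((v i : ℝ) + if i = i0 then (c : ℝ) else 0) * l i
      = (v i : ℝ) * l i + (if i = i0 then (c : ℝ) * l i else 0) := by
    intro i; split <;> ring
  push_cast
  rw [Finset.sum_congr rfl fun i _ => key i, Finset.sum_add_distrib]
  simp

theorem vertBdry_eq_Ioc (d : ℕ) (hd : 0 < d) (l : Fin d → ℝ) (i0 : Fin d)
    (hunit : ∑ i, l i ^ 2 = 1) (hnn : ∀ i, 0 ≤ l i) (hmax : ∀ i, l i ≤ l i0)
    (r : ℝ) (hr : r = l i0) (h : ℝ) (v : Fin d → ℤ) :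
    (memVU l h v ∧ memVL l h v) ↔ dotl v l ∈ Set.Ioc (h - r) h := by

  have hrpos : 0 < r := by
    rw [hr]
    by_contra hle; push_neg at hle
    have hz : ∀ i, l i = 0 := fun i => le_antisymm ((hmax i).trans hle) (hnn i)
    simp [hz] at hunit
  constructor
  · rintro ⟨⟨w, hadj, z, ⟨t, ht, rfl⟩, hhz⟩, ⟨w', hadj', hall⟩⟩
    rw [height_lin] at hhz
    have hb : |dotl w l - dotl v l| ≤ r := hr ▸ dotl_diff_le l i0 hnn hmax hadj
    have hb' : |dotl w' l - dotl v l| ≤ r := hr ▸ dotl_diff_le l i0 hnn hmax hadj'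
    have hble := (le_abs_self _).trans hb
    have hble' : -r ≤ dotl w' l - dotl v l := by
      have := neg_abs_le (dotl w' l - dotl v l); linarith
    have hvh : dotl v l ≤ h := by
      by_contra hgt; push_neg at hgt
      set s := min (1 / 2 : ℝ) ((dotl v l - h) / (r + 1)) with hs
      have hs0 : 0 < s := lt_min (by norm_num) (div_pos (by linarith) (by linarith))
      have hs1 : s < 1 := lt_of_le_of_lt (min_le_left _ _) (by norm_num)
      have hcontra := hall _ ⟨1 - s, ⟨by linarith, by linarith⟩, rfl⟩
      rw [height_lin] at hcontra
      have hsr : s * r ≤ dotl v l - h := by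
        have h1 : s ≤ (dotl v l - h) / (r + 1) := min_le_right _ _
        have h2 : s * r ≤ ((dotl v l - h) / (r + 1)) * r :=
          mul_le_mul_of_nonneg_right h1 hrpos.le
        have h3 : ((dotl v l - h) / (r + 1)) * r ≤ dotl v l - h := by
          rw [div_mul_eq_mul_div, div_le_iff₀ (by linarith : (0:ℝ) < r + 1)]
          nlinarith
        linarith
      nlinarith
    refine ⟨?_, hvh⟩
    nlinarith [ht.1, ht.2]
  · rintro ⟨h1, h2⟩
    constructor
    · refine ⟨_, adj_step v i0 1 (by norm_num), ?_⟩
      set s := max ((h - dotl v l) / r) (1 / 2 : ℝ) with hs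
      have hs0 : 0 < s := lt_of_lt_of_le (by norm_num) (le_max_right _ _)
      have hs1 : s < 1 := by
        apply max_lt _ (by norm_num)
        rw [div_lt_one hrpos]; linarith
      refine ⟨_, ⟨1 - s, ⟨by linarith, by linarith⟩, rfl⟩, ?_⟩
      rw [height_lin, dotl_step]
      have hsr : h - dotl v l ≤ s * r := by
        have h3 : (h - dotl v l) / r ≤ s := le_max_left _ _
        have := mul_le_mul_of_nonneg_right h3 hrpos.le
        rwa [div_mul_cancel₀ _ hrpos.ne'] at this
      push_cast
      rw [hr] at hsr
      nlinarith
    · refine ⟨_, adj_step v i0 (-1) (by norm_num), ?_⟩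
      rintro z ⟨t, ht, rfl⟩
      rw [height_lin, dotl_step]
      push_cast
      rw [hr] at hrpos
      nlinarith [ht.1, ht.2]
end

section
/- Let v ∈ ℤ^d and let e be a nearest-neighbour edge of ℤ^d with endpoints w, x, where (under the axes ordering convention) x = w − e_i for some i. If the interior of e intersects the half-space {z : z·ℓ ≥ (v+e_d)·ℓ}, then e is not incident to any vertex of VertBdry_{v·ℓ}; similarly, if the interior of e is contained in {z : z·ℓ < (v−e_d)·ℓ}, then e is not incident to any vertex of VertBdry_{v·ℓ}. -/
/-!
Statement 2 (Lemma "two internal"): let v ∈ ℤ^d and let e be a nearest-neighbour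
edge with endpoints w and x = w − eᵢ (axes ordering convention).  If the interior
of e meets the half-space {z : z·ℓ ≥ (v+e_d)·ℓ} then neither endpoint of e lies
in VertBdry_{v·ℓ} = V(U_{v·ℓ}) ∩ V(L_{v·ℓ}); similarly if the interior of e is
contained in {z : z·ℓ < (v−e_d)·ℓ}.
-/

variable {d : ℕ}

/-- Membership in the vertex boundary at height h. -/
def memVertBdry (l : Fin d → ℝ) (h : ℝ) (v : Fin d → ℤ) : Prop :=
  memVU l h v ∧ memVL l h v

lemma heightR_combo (l : Fin d → ℝ) (w x : Fin d → ℤ) (t : ℝ) :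
    heightR l (fun j => t * (w j : ℝ) + (1 - t) * (x j : ℝ)) =
      t * dotl w l + (1 - t) * dotl x l := by
  unfold heightR dotl
  rw [Finset.mul_sum, Finset.mul_sum, ← Finset.sum_add_distrib]
  exact Finset.sum_congr rfl fun j _ => by ring

lemma li0_pos (l : Fin d → ℝ) (i0 : Fin d)
    (hunit : ∑ i, l i ^ 2 = 1) (hnn : ∀ i, 0 ≤ l i) (hmax : ∀ i, l i ≤ l i0) :
    0 < l i0 := by
  by_contra hc
  push_neg at hc
  have hz : ∀ i, l i = 0 := fun i => le_antisymm (le_trans (hmax i) hc) (hnn i)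
  simp [hz] at hunit

lemma neighbor_bd (l : Fin d → ℝ) (i0 : Fin d) (hnn : ∀ i, 0 ≤ l i)
    (hmax : ∀ i, l i ≤ l i0) {y u : Fin d → ℤ} (h : adjZ y u) :
    |dotl y l - dotl u l| ≤ l i0 := by
  unfold dotl
  rw [← Finset.sum_sub_distrib]
  have h1 : |∑ j, ((y j : ℝ) * l j - (u j : ℝ) * l j)| ≤
      ∑ j, |((y j : ℝ) - (u j : ℝ))| * l j := by
    refine le_trans (Finset.abs_sum_le_sum_abs _ _) ?_
    refine Finset.sum_le_sum fun j _ => ?_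
    rw [show (y j : ℝ) * l j - (u j : ℝ) * l j = ((y j : ℝ) - u j) * l j by ring,
      abs_mul, abs_of_nonneg (hnn j)]
  refine le_trans h1 ?_
  have h2 : ∑ j, |((y j : ℝ) - (u j : ℝ))| * l j ≤ ∑ j, |((y j : ℝ) - (u j : ℝ))| * l i0 :=
    Finset.sum_le_sum fun j _ => mul_le_mul_of_nonneg_left (hmax j) (abs_nonneg _)
  refine le_trans h2 ?_
  rw [← Finset.sum_mul]
  have h3 : ∑ j, |((y j : ℝ) - (u j : ℝ))| = 1 := by
    have := h
    unfold adjZ at this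
    have : ((∑ j, |y j - u j| : ℤ) : ℝ) = 1 := by rw [this]; norm_num
    push_cast at this
    convert this using 2
  rw [h3, one_mul]

lemma notMemVL (l : Fin d → ℝ) (i0 : Fin d) (hnn : ∀ i, 0 ≤ l i)
    (hmax : ∀ i, l i ≤ l i0) (hl0 : 0 < l i0) {h : ℝ} {y : Fin d → ℤ}
    (hY : h < dotl y l) : ¬ memVL l h y := by
  rintro ⟨u, hadj, hall⟩
  set Y := dotl y l
  set U := dotl u l
  have hYU : Y - U ≤ l i0 := le_trans (le_abs_self _) (neighbor_bd l i0 hnn hmax hadj)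
  set s : ℝ := min (1/2) ((Y - h) / l i0) with hs
  have hspos : 0 < s := lt_min (by norm_num) (div_pos (by linarith) hl0)
  have hshalf : s ≤ 1/2 := min_le_left _ _
  have hsle : s * l i0 ≤ Y - h := by
    have := min_le_right (1/2 : ℝ) ((Y - h) / l i0)
    calc s * l i0 ≤ ((Y - h) / l i0) * l i0 :=
          mul_le_mul_of_nonneg_right this hl0.le
      _ = Y - h := div_mul_cancel₀ _ hl0.ne'
  have ht : (1 - s) ∈ Set.Ioo (0:ℝ) 1 := ⟨by linarith, by linarith⟩
  have hz := hall _ ⟨1 - s, ht, rfl⟩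
  rw [heightR_combo] at hz
  -- hz : (1 - s) * Y + (1 - (1 - s)) * U < h
  have hsYU : s * (Y - U) ≤ s * l i0 := mul_le_mul_of_nonneg_left hYU hspos.le
  nlinarith

lemma notMemVU (l : Fin d → ℝ) (i0 : Fin d) (hnn : ∀ i, 0 ≤ l i)
    (hmax : ∀ i, l i ≤ l i0) (hl0 : 0 < l i0) {h : ℝ} {y : Fin d → ℤ}
    (hY : dotl y l ≤ h - l i0) : ¬ memVU l h y := by
  rintro ⟨u, hadj, z, ⟨t, ⟨ht0, ht1⟩, rfl⟩, hge⟩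
  rw [heightR_combo] at hge
  set Y := dotl y l
  set U := dotl u l
  have hYU : U - Y ≤ l i0 := le_trans (le_abs_self _) (by
    rw [abs_sub_comm]; exact neighbor_bd l i0 hnn hmax hadj)
  have hYh : Y < h := by linarith
  have hUh : U ≤ h := by linarith
  nlinarith

lemma aux_sup {a b c : ℝ} (hb : 0 ≤ b)
    (h : ∀ t : ℝ, t ∈ Set.Ioo (0:ℝ) 1 → a + t * b < c) : a + b ≤ c := by
  rcases eq_or_lt_of_le hb with hb0 | hb0
  · have := h (1/2) ⟨by norm_num, by norm_num⟩
    nlinarith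
  · by_contra hc
    push_neg at hc
    set t : ℝ := max (1/2) ((c - a) / b) with hts
    have hd1 : (c - a) / b < 1 := by
      rw [div_lt_one hb0]; linarith
    have ht : t ∈ Set.Ioo (0:ℝ) 1 :=
      ⟨lt_of_lt_of_le (by norm_num) (le_max_left _ _), max_lt (by norm_num) hd1⟩
    have := h t ht
    have htb : c - a ≤ t * b := by
      calc c - a = ((c - a) / b) * b := (div_mul_cancel₀ _ hb0.ne').symm
        _ ≤ t * b := mul_le_mul_of_nonneg_right (le_max_right _ _) hb0.le
    linarith

lemma dotl_update (l : Fin d → ℝ) (w : Fin d → ℤ) (i : Fin d) :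
    dotl (Function.update w i (w i - 1)) l = dotl w l - l i := by
  unfold dotl
  have key : ∀ j : Fin d, ((Function.update w i (w i - 1) j : ℤ) : ℝ) * l j =
      (w j : ℝ) * l j - (if j = i then l i else 0) := by
    intro j
    by_cases hj : j = i
    · subst hj; rw [Function.update_self, if_pos rfl]; push_cast; ring
    · rw [Function.update_of_ne hj, if_neg hj, sub_zero]
  rw [Finset.sum_congr rfl fun j _ => key j, Finset.sum_sub_distrib,
    Finset.sum_ite_eq' Finset.univ i (fun _ => l i)]
  simp

theorem edge_not_in_edgeBdry (d : ℕ) (hd : 0 < d) (l : Fin d → ℝ) (i0 : Fin d)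
    (hunit : ∑ i, l i ^ 2 = 1) (hnn : ∀ i, 0 ≤ l i) (hmax : ∀ i, l i ≤ l i0)
    (v w x : Fin d → ℤ) (i : Fin d) (hx : x = Function.update w i (w i - 1)) :
    ((∃ z ∈ edgeInterior w x, dotl v l + l i0 ≤ heightR l z) →
      ¬ memVertBdry l (dotl v l) w ∧ ¬ memVertBdry l (dotl v l) x) ∧
    ((∀ z ∈ edgeInterior w x, heightR l z < dotl v l - l i0) →
      ¬ memVertBdry l (dotl v l) w ∧ ¬ memVertBdry l (dotl v l) x) := by
  have hl0 : 0 < l i0 := li0_pos l i0 hunit hnn hmax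
  have hdx : dotl x l = dotl w l - l i := by rw [hx]; exact dotl_update l w i
  constructor
  · rintro ⟨z, ⟨t, ⟨ht0, ht1⟩, rfl⟩, hge⟩
    rw [heightR_combo, hdx] at hge
    -- hge : h + l i0 ≤ t * W + (1 - t) * X
    have hli : t * l i < l i0 := by
      calc t * l i ≤ t * l i0 := mul_le_mul_of_nonneg_left (hmax i) ht0.le
        _ < 1 * l i0 := mul_lt_mul_of_pos_right ht1 hl0
        _ = l i0 := one_mul _
    have hXh : dotl v l < dotl x l := by rw [hdx]; nlinarith [hnn i]
    have hWh : dotl v l < dotl w l := by nlinarith [hnn i]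
    exact ⟨fun hb => notMemVL l i0 hnn hmax hl0 hWh hb.2,
      fun hb => notMemVL l i0 hnn hmax hl0 hXh hb.2⟩
  · intro hall
    have hW : (dotl w l - l i) + l i ≤ dotl v l - l i0 := by
      refine aux_sup (hnn i) fun t ht => ?_
      have := hall _ ⟨t, ht, rfl⟩
      rw [heightR_combo, hdx] at this
      nlinarith [this]
    have hWle : dotl w l ≤ dotl v l - l i0 := by linarith
    have hXle : dotl x l ≤ dotl v l - l i0 := by rw [hdx]; linarith [hnn i]
    exact ⟨fun hb => notMemVU l i0 hnn hmax hl0 hWle hb.1,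
      fun hb => notMemVU l i0 hnn hmax hl0 hXle hb.1⟩
end

section
/- A string S (a finite open connected component of a slab Slab_{y·ℓ, z·ℓ} having renewal points at both y and z with y·ℓ < z·ℓ) contains a unique vertex of minimal height, namely y, and a unique vertex of maximal height, namely z; moreover the set of renewal points of S is totally and strictly ordered by height. -/
/-!
Statement 3: a string S — a finite connected subgraph of the slab
Slab_{y·ℓ, z·ℓ} = U_{y·ℓ} ∩ L_{z·ℓ} with renewal points at y and z, y·ℓ < z·ℓ —
has y as its unique vertex of minimal height and z as its unique vertex of
maximal height, and its renewal points are totally and strictly ordered by height.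
-/

variable {d : ℕ}

def connectedOn (S : Set (Fin d → ℤ)) : Prop :=
  ∀ x ∈ S, ∀ y ∈ S,
    Relation.ReflTransGen (fun a b => a ∈ S ∧ b ∈ S ∧ adjZ a b) x y

/-- x is a renewal point of S, with VertBdry_h = {v : v·ℓ ∈ (h−r, h]}. -/
def renewalPt (l : Fin d → ℝ) (r : ℝ) (S : Set (Fin d → ℤ)) (x : Fin d → ℤ) : Prop :=
  x ∈ S ∧ {v ∈ S | dotl v l ∈ Set.Ioc (dotl x l - r) (dotl x l)} = {x}

theorem string_base_head_unique (d : ℕ) (hd : 0 < d) (l : Fin d → ℝ) (i0 : Fin d)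
    (hunit : ∑ i, l i ^ 2 = 1) (hnn : ∀ i, 0 ≤ l i) (hmax : ∀ i, l i ≤ l i0)
    (r : ℝ) (hr : r = l i0)
    (y z : Fin d → ℤ) (hyz : dotl y l < dotl z l)
    (S : Set (Fin d → ℤ)) (hfin : S.Finite) (hconn : connectedOn S)
    (hslab : ∀ v ∈ S, memVU l (dotl y l) v ∧ memVL l (dotl z l) v)
    (hy : renewalPt l r S y) (hz : renewalPt l r S z) :
    (∀ v ∈ S, v ≠ y → dotl y l < dotl v l) ∧
    (∀ v ∈ S, v ≠ z → dotl v l < dotl z l) ∧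
    (∀ a b, renewalPt l r S a → renewalPt l r S b → a ≠ b →
      dotl a l ≠ dotl b l) := by
  have hr0 : 0 < r := by
    rw [hr]
    by_contra h
    push_neg at h
    have hz0 : ∀ i, l i = 0 := fun i => le_antisymm ((hmax i).trans h) (hnn i)
    simp [hz0] at hunit
  -- adjacency height bound
  have key : ∀ v w : Fin d → ℤ, adjZ v w → |dotl v l - dotl w l| ≤ r := by
    intro v w hadj
    rw [hr]
    have h1 : dotl v l - dotl w l = ∑ i, ((v i - w i : ℤ) : ℝ) * l i := by
      simp [dotl, sub_mul, Finset.sum_sub_distrib]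
    rw [h1]
    calc |∑ i, ((v i - w i : ℤ) : ℝ) * l i|
        ≤ ∑ i, |((v i - w i : ℤ) : ℝ) * l i| := Finset.abs_sum_le_sum_abs _ _
      _ = ∑ i, ((|v i - w i| : ℤ) : ℝ) * l i := by
          refine Finset.sum_congr rfl fun i _ => ?_
          rw [abs_mul, abs_of_nonneg (hnn i), Int.cast_abs]
      _ ≤ ∑ i, ((|v i - w i| : ℤ) : ℝ) * l i0 := by
          refine Finset.sum_le_sum fun i _ => ?_
          refine mul_le_mul_of_nonneg_left (hmax i) ?_
          exact_mod_cast abs_nonneg (v i - w i)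
      _ = ((∑ i, |v i - w i| : ℤ) : ℝ) * l i0 := by
          push_cast
          rw [Finset.sum_mul]
      _ = l i0 := by rw [hadj]; simp
  have hcomb : ∀ (t : ℝ) (v w : Fin d → ℤ),
      heightR l (fun i => t * (v i : ℝ) + (1 - t) * (w i : ℝ))
        = t * dotl v l + (1 - t) * dotl w l := by
    intro t v w
    simp only [heightR, dotl, Finset.mul_sum, ← Finset.sum_add_distrib]
    exact Finset.sum_congr rfl fun i _ => by ring
  -- lower bound: every vertex of S has height > y·l − r
  have hlb : ∀ v ∈ S, dotl y l - r < dotl v l := by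
    intro v hv
    obtain ⟨w, hadj, p, hp, hge⟩ := (hslab v hv).1
    obtain ⟨t, ⟨ht0, ht1⟩, rfl⟩ := hp
    rw [hcomb] at hge
    have hw : dotl w l ≤ dotl v l + r := by
      have := key v w hadj
      have := neg_abs_le (dotl v l - dotl w l)
      linarith [abs_le.1 (key v w hadj)]
    nlinarith [hge, hw, hr0, ht0, ht1]
  -- upper bound: every vertex of S has height ≤ z·l
  have hub : ∀ v ∈ S, dotl v l ≤ dotl z l := by
    intro v hv
    obtain ⟨w, hadj, hall⟩ := (hslab v hv).2
    by_contra hlt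
    push_neg at hlt
    set δ := dotl v l - dotl z l with hδ
    have hδ0 : 0 < δ := by simp [hδ]; linarith
    set s := min (1/2 : ℝ) (δ / (2 * r)) with hs
    have hs0 : 0 < s := lt_min (by norm_num) (by positivity)
    have hs1 : s < 1 := lt_of_le_of_lt (min_le_left _ _) (by norm_num)
    set t := 1 - s with ht
    have htI : t ∈ Set.Ioo (0 : ℝ) 1 := ⟨by simp [ht]; linarith, by simp [ht]; linarith⟩
    have hmem : (fun i => t * (v i : ℝ) + (1 - t) * (w i : ℝ)) ∈ edgeInterior v w :=
      ⟨t, htI, rfl⟩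
    have hlt2 := hall _ hmem
    rw [hcomb] at hlt2
    have hw : dotl v l - r ≤ dotl w l := by
      linarith [abs_le.1 (key v w hadj)]
    have hsr : s * r ≤ δ / 2 := by
      have : s ≤ δ / (2 * r) := min_le_right _ _
      calc s * r ≤ (δ / (2 * r)) * r := mul_le_mul_of_nonneg_right this hr0.le
        _ = δ / 2 := by field_simp
    have h1 : dotl v l - s * r ≤ t * dotl v l + (1 - t) * dotl w l := by
      have : (1 - t) = s := by simp [ht]
      rw [this]
      nlinarith [hw, hs0]
    linarith
  refine ⟨?_, ?_, ?_⟩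
  · intro v hv hne
    by_contra h
    push_neg at h
    have hmem : v ∈ {x ∈ S | dotl x l ∈ Set.Ioc (dotl y l - r) (dotl y l)} :=
      ⟨hv, hlb v hv, h⟩
    rw [hy.2] at hmem
    exact hne hmem
  · intro v hv hne
    by_contra h
    push_neg at h
    have heq : dotl v l = dotl z l := le_antisymm (hub v hv) h
    have hmem : v ∈ {x ∈ S | dotl x l ∈ Set.Ioc (dotl z l - r) (dotl z l)} :=
      ⟨hv, by rw [heq]; exact ⟨by linarith, le_refl _⟩⟩
    rw [hz.2] at hmem
    exact hne hmem
  · intro a b ha hb hne heq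
    have hmem : b ∈ {v ∈ S | dotl v l ∈ Set.Ioc (dotl a l - r) (dotl a l)} :=
      ⟨hb.1, by rw [← heq]; exact ⟨by linarith, le_refl _⟩⟩
    rw [ha.2] at hmem
    exact hne hmem.symm
end

section
/- Suppose μ is a probability measure on sausages based at the origin with E_μ[head(S)·ℓ] = ∞. Then for every δ > 0 there exists ε > 0 such that under the i.i.d. concatenation law μ^⊗ℕ, the probability that the set of renewal levels in [0,u] has cardinality at least δu is at most exp{−εu} for all u ∈ ℕ. (Proof via truncation: choose k with E_μ[min{k, head(S)·ℓ}] ≥ 2/δ and apply the exponential Markov inequality to the truncated partial sums.) -/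
/-!
Truncate the heights at a level `k` so large that `E[min(H, k)] > 2/δ`, which monotone convergence
allows because `E[H] = ∞`. If at least `δu` renewals occur by level `u`, the first `⌈δu⌉`
truncated heights sum to at most `u` although their mean sum is at least `2u`. The truncated
heights are independent and bounded, so Hoeffding's inequality makes this deviation exponentially
unlikely in `u`.
-/

open MeasureTheory ProbabilityTheory

section Truncation

variable {Ω : Type*} [MeasurableSpace Ω] {μ : Measure Ω} {f : Ω → ℝ}

lemma iSup_lintegral_ofReal_min_natCast (hf : Measurable f) :
    ⨆ k : ℕ, ∫⁻ ω, ENNReal.ofReal (min (f ω) k) ∂μ = ∫⁻ ω, ENNReal.ofReal (f ω) ∂μ := by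
  have hmono : Monotone fun (k : ℕ) ω ↦ ENNReal.ofReal (min (f ω) k) := fun a b hab ω ↦
    ENNReal.ofReal_le_ofReal (min_le_min le_rfl (Nat.cast_le.mpr hab))
  rw [← lintegral_iSup (fun k ↦ (hf.min measurable_const).ennreal_ofReal) hmono]
  refine lintegral_congr fun ω ↦ le_antisymm
    (iSup_le fun k ↦ ENNReal.ofReal_le_ofReal (min_le_left _ _)) ?_
  calc ENNReal.ofReal (f ω) = ENNReal.ofReal (min (f ω) ⌈f ω⌉₊) := by
        rw [min_eq_left (Nat.le_ceil _)]
    _ ≤ ⨆ k : ℕ, ENNReal.ofReal (min (f ω) k) :=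
        le_iSup (fun k : ℕ ↦ ENNReal.ofReal (min (f ω) k)) _

lemma exists_lt_integral_min_natCast [IsFiniteMeasure μ] (hf : Measurable f)
    (hf_nonneg : ∀ ω, 0 ≤ f ω) (hf_top : ∫⁻ ω, ENNReal.ofReal (f ω) ∂μ = ⊤) (C : ℝ) :
    ∃ k : ℕ, C < ∫ ω, min (f ω) k ∂μ := by
  rw [← iSup_lintegral_ofReal_min_natCast hf] at hf_top
  obtain ⟨k, hk⟩ := lt_iSup_iff.mp (hf_top ▸ ENNReal.ofReal_lt_top : ENNReal.ofReal C < _)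
  refine ⟨k, ?_⟩
  have hbdd : ∀ ω, min (f ω) k ∈ Set.Icc (0 : ℝ) k := fun ω ↦
    ⟨le_min (hf_nonneg ω) k.cast_nonneg, min_le_right _ _⟩
  rw [← ofReal_integral_eq_lintegral_ofReal
    (.of_mem_Icc 0 k (hf.min measurable_const).aemeasurable (ae_of_all _ hbdd))
    (ae_of_all _ fun ω ↦ (hbdd ω).1)] at hk
  exact (ENNReal.ofReal_lt_ofReal_iff'.mp hk).1

end Truncation

/-- Hoeffding's inequality for the lower tail of a sum of independent bounded variables. -/
lemma measureReal_sum_range_le_sub_le_of_mem_Icc {Ω : Type*} [MeasurableSpace Ω]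
    {μ : Measure Ω} [IsProbabilityMeasure μ] {X : ℕ → Ω → ℝ} {a b m t : ℝ} {n : ℕ}
    (hX : ∀ i, Measurable (X i)) (hindep : iIndepFun X μ)
    (hab : ∀ i ω, X i ω ∈ Set.Icc a b) (hmean : ∀ i, μ[X i] = m) (ht : 0 ≤ t) :
    μ.real {ω | ∑ i ∈ Finset.range n, X i ω ≤ n * m - t}
      ≤ Real.exp (-2 * t ^ 2 / (n * (b - a) ^ 2)) := by
  have hsubG : ∀ i, HasSubgaussianMGF (fun ω ↦ m - X i ω) ((‖b - a‖₊ / 2) ^ 2) μ := fun i ↦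
    ((hasSubgaussianMGF_of_mem_Icc (hX i).aemeasurable (ae_of_all _ (hab i))).neg).congr
      (ae_of_all _ fun ω ↦ by simp [hmean i])
  have hindep' : iIndepFun (fun i ω ↦ m - X i ω) μ :=
    hindep.comp (fun _ x ↦ m - x) fun _ ↦ measurable_const.sub measurable_id
  have hcoef : 2 * (n : ℝ) * ((‖b - a‖₊ / 2) ^ 2 : NNReal) = n * (b - a) ^ 2 / 2 := by
    push_cast
    rw [Real.norm_eq_abs, div_pow, sq_abs]
    ring
  calc μ.real {ω | ∑ i ∈ Finset.range n, X i ω ≤ n * m - t}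
      = μ.real {ω | t ≤ ∑ i ∈ Finset.range n, (m - X i ω)} := by
        congr 1
        ext ω
        simp only [Set.mem_ofPred_eq, Finset.sum_sub_distrib, Finset.sum_const,
          Finset.card_range, nsmul_eq_mul]
        constructor <;> intro h <;> linarith
    _ ≤ Real.exp (-t ^ 2 / (2 * n * ((‖b - a‖₊ / 2) ^ 2 : NNReal))) :=
        HasSubgaussianMGF.measure_sum_range_ge_le_of_iIndepFun hindep' (fun i _ ↦ hsubG i) ht
    _ = Real.exp (-2 * t ^ 2 / (n * (b - a) ^ 2)) := by
        rw [hcoef, div_div_eq_mul_div]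
        ring_nf

lemma setOf_exists_sum_range_le_subset {Ω : Type*} {H X : ℕ → Ω → ℝ}
    (hH : ∀ i ω, 0 ≤ H i ω) (hXH : ∀ i ω, X i ω ≤ H i ω) (r u : ℝ) :
    {ω | ∃ m : ℕ, r ≤ m ∧ ∑ i ∈ Finset.range m, H i ω ≤ u}
      ⊆ {ω | ∑ i ∈ Finset.range ⌈r⌉₊, X i ω ≤ u} := by
  rintro ω ⟨m, hrm, hsum⟩
  calc ∑ i ∈ Finset.range ⌈r⌉₊, X i ω
      ≤ ∑ i ∈ Finset.range ⌈r⌉₊, H i ω := Finset.sum_le_sum fun i _ ↦ hXH i ω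
    _ ≤ ∑ i ∈ Finset.range m, H i ω :=
        Finset.sum_le_sum_of_subset_of_nonneg
          (Finset.range_subset_range.mpr (Nat.ceil_le.mpr hrm)) fun i _ _ ↦ hH i ω
    _ ≤ u := hsum

lemma mul_le_two_mul_sq_div_of_two_le_mul {δ m K u n : ℝ} (hδ : 0 < δ) (hδm : 2 ≤ δ * m)
    (hK : 0 ≤ K) (hu : 0 ≤ u) (hn : δ * u ≤ n) :
    δ * m ^ 2 / (2 * K) * u ≤ 2 * (n * m - u) ^ 2 / (n * K) := by
  rcases (mul_nonneg hδ.le hu |>.trans hn).eq_or_lt with rfl | hn_pos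
  · obtain rfl : u = 0 := by nlinarith
    simp
  have hm : 0 ≤ m := by nlinarith
  calc δ * m ^ 2 / (2 * K) * u = δ * u * m ^ 2 / (2 * K) := by ring
    _ ≤ n * m ^ 2 / (2 * K) := by gcongr
    _ = 2 * (n * m / 2) ^ 2 / (n * K) := by
        rcases hK.eq_or_lt with rfl | hK
        · simp
        field_simp
    _ ≤ 2 * (n * m - u) ^ 2 / (n * K) := by
        gcongr 2 * ?_ ^ 2 / _
        all_goals nlinarith

theorem few_renewals_of_infinite_mean
    {Ω : Type*} [MeasurableSpace Ω] (P : Measure Ω) [IsProbabilityMeasure P]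
    (H : ℕ → Ω → ℝ) (hmeas : ∀ i, Measurable (H i))
    (hindep : iIndepFun H P)
    (hident : ∀ i, P.map (H i) = P.map (H 0))
    (hnn : ∀ i ω, 0 ≤ H i ω)
    (hinf : ∫⁻ ω, ENNReal.ofReal (H 0 ω) ∂P = ⊤) :
    ∀ δ : ℝ, 0 < δ → ∃ ε : ℝ, 0 < ε ∧ ∀ u : ℕ,
      P {ω | ∃ m : ℕ, δ * u ≤ (m : ℝ) ∧ ∑ i ∈ Finset.range m, H i ω ≤ u}
        ≤ ENNReal.ofReal (Real.exp (-ε * u)) := by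
  intro δ hδ
  obtain ⟨k, hk⟩ := exists_lt_integral_min_natCast (hmeas 0) (hnn 0) hinf (2 / δ)
  set m := ∫ ω, min (H 0 ω) k ∂P
  set X : ℕ → Ω → ℝ := fun i ω ↦ min (H i ω) k
  have hX_Icc (i : ℕ) (ω : Ω) : X i ω ∈ Set.Icc 0 (k : ℝ) :=
    ⟨le_min (hnn i ω) k.cast_nonneg, min_le_right _ _⟩
  have hX_mean (i : ℕ) : P[X i] = m :=
    (IdentDistrib.comp ⟨(hmeas i).aemeasurable, (hmeas 0).aemeasurable, hident i⟩
      (measurable_id.min measurable_const)).integral_eq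
  have hδm : 2 ≤ δ * m := by rw [div_lt_iff₀' hδ] at hk; exact hk.le
  have hm_pos : 0 < m := pos_of_mul_pos_right (by linarith) hδ.le
  have hk_pos : (0 : ℝ) < k := by
    refine Nat.cast_pos.mpr (Nat.pos_of_ne_zero fun h ↦ hm_pos.ne' ?_)
    have hX0 : X 0 = 0 := funext fun ω ↦ by simp [X, h, hnn 0 ω]
    rw [← hX_mean 0, hX0, Pi.zero_def, integral_zero]
  refine ⟨δ * m ^ 2 / (2 * k ^ 2), by positivity, fun u ↦ ?_⟩
  set n : ℕ := ⌈δ * u⌉₊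
  have hn : δ * u ≤ n := Nat.le_ceil _
  calc P {ω | ∃ m : ℕ, δ * u ≤ (m : ℝ) ∧ ∑ i ∈ Finset.range m, H i ω ≤ u}
      ≤ P {ω | ∑ i ∈ Finset.range n, X i ω ≤ n * m - (n * m - u)} := by
        simpa only [sub_sub_cancel] using measure_mono
          (setOf_exists_sum_range_le_subset hnn (fun i ω ↦ min_le_left _ _) _ _)
    _ ≤ ENNReal.ofReal (Real.exp (-2 * (n * m - u) ^ 2 / (n * (k - 0) ^ 2))) := by
        rw [← ofReal_measureReal]
        exact ENNReal.ofReal_le_ofReal <| measureReal_sum_range_le_sub_le_of_mem_Icc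
          (fun i ↦ (hmeas i).min measurable_const)
          (hindep.comp _ fun _ ↦ measurable_id.min measurable_const) hX_Icc hX_mean
          (by nlinarith)
    _ ≤ ENNReal.ofReal (Real.exp (-(δ * m ^ 2 / (2 * k ^ 2)) * u)) := by
        gcongr
        rw [sub_zero, neg_mul, neg_mul, neg_div, neg_le_neg_iff]
        exact mul_le_two_mul_sq_div_of_two_le_mul hδ hδm (by positivity) u.cast_nonneg hn
end

section
/- Given a finite collection 𝒞 of real intervals of equal length, there exists a pairwise disjoint subcollection ℐ ⊆ 𝒞 such that Σ_{I ∈ ℐ} |I| ≥ (1/2)|⋃_{I ∈ 𝒞} I|. -/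
/-!
Statement 15 (Vitali-type selection for equal-length intervals): given a finite
collection of real intervals of equal length, there is a pairwise disjoint
subcollection whose total length is at least half the Lebesgue measure of the
union of the collection.
-/

open MeasureTheory

theorem vitali_aux {ι : Type*} (a : ι → ℝ) (len : ℝ) (hlen : 0 ≤ len) :
    ∀ n (t : Finset ι), t.card ≤ n →
      ∃ s ⊆ t, (∀ i ∈ s, ∀ j ∈ s, i ≠ j →
          Disjoint (Set.Icc (a i) (a i + len)) (Set.Icc (a j) (a j + len))) ∧
        volume (⋃ i ∈ t, Set.Icc (a i) (a i + len)) ≤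
          ENNReal.ofReal (2 * (s.card * len)) := by
  classical
  intro n
  induction n with
  | zero =>
    intro t ht
    have : t = ∅ := Finset.card_eq_zero.mp (Nat.le_zero.mp ht)
    subst this
    exact ⟨∅, Finset.Subset.refl _, by simp, by simp⟩
  | succ n ih =>
    intro t ht
    rcases t.eq_empty_or_nonempty with rfl | hne
    · exact ⟨∅, Finset.Subset.refl _, by simp, by simp⟩
    obtain ⟨i, hit, hmin⟩ := t.exists_min_image a hne
    set t' := t.filter (fun j => a i + len < a j) with ht'
    have hit' : i ∉ t' := by
      simp only [ht', Finset.mem_filter]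
      rintro ⟨-, h⟩
      linarith
    have htsub : t' ⊆ t := Finset.filter_subset _ _
    have hcard : t'.card ≤ n := by
      have : t'.card < t.card := Finset.card_lt_card ⟨htsub, fun h => hit' (h hit)⟩
      omega
    obtain ⟨s', hs't', hdisj', hvol'⟩ := ih t' hcard
    refine ⟨insert i s', ?_, ?_, ?_⟩
    · exact Finset.insert_subset hit (hs't'.trans htsub)
    · intro x hx y hy hxy
      have key : ∀ j ∈ s', Disjoint (Set.Icc (a i) (a i + len))
          (Set.Icc (a j) (a j + len)) := by
        intro j hj
        have hj' : a i + len < a j := (Finset.mem_filter.mp (hs't' hj)).2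
        rw [Set.disjoint_left]
        rintro x ⟨-, hx2⟩ ⟨hx3, -⟩
        linarith
      rcases Finset.mem_insert.mp hx with rfl | hx' <;>
        rcases Finset.mem_insert.mp hy with rfl | hy'
      · exact absurd rfl hxy
      · exact key y hy'
      · exact (key x hx').symm
      · exact hdisj' x hx' y hy' hxy
    · have hcov : (⋃ j ∈ t, Set.Icc (a j) (a j + len)) ⊆
          Set.Icc (a i) (a i + 2 * len) ∪ ⋃ j ∈ t', Set.Icc (a j) (a j + len) := by
        refine Set.iUnion₂_subset fun j hj => ?_
        by_cases h : a i + len < a j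
        · have hjt' : j ∈ t' := by
            rw [ht', Finset.mem_filter]
            exact ⟨hj, h⟩
          intro x hx
          exact Or.inr (Set.mem_biUnion hjt' hx)
        · refine Set.subset_union_of_subset_left ?_ _
          push_neg at h
          exact Set.Icc_subset_Icc (hmin j hj) (by linarith)
      have hins : i ∉ s' := fun h => hit' (hs't' h)
      calc volume (⋃ j ∈ t, Set.Icc (a j) (a j + len))
          ≤ volume (Set.Icc (a i) (a i + 2 * len)) +
            volume (⋃ j ∈ t', Set.Icc (a j) (a j + len)) :=
            (measure_mono hcov).trans (measure_union_le _ _)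
        _ ≤ ENNReal.ofReal (2 * len) + ENNReal.ofReal (2 * (s'.card * len)) := by
            gcongr
            rw [Real.volume_Icc]
            apply ENNReal.ofReal_le_ofReal
            ring_nf
            simp
        _ = ENNReal.ofReal (2 * ((insert i s').card * len)) := by
            rw [← ENNReal.ofReal_add (by linarith) (by positivity),
              Finset.card_insert_of_notMem hins]
            congr 1
            push_cast
            ring

theorem vitali_equal_length {ι : Type*} [Fintype ι] (a : ι → ℝ) (len : ℝ)
    (hlen : 0 ≤ len) :
    ∃ s : Finset ι,
      (∀ i ∈ s, ∀ j ∈ s, i ≠ j →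
        Disjoint (Set.Icc (a i) (a i + len)) (Set.Icc (a j) (a j + len))) ∧
      (volume (⋃ i, Set.Icc (a i) (a i + len))).toReal ≤ 2 * (s.card * len) := by
  obtain ⟨s, -, hdisj, hvol⟩ :=
    vitali_aux a len hlen (Finset.univ.card) Finset.univ le_rfl
  refine ⟨s, hdisj, ?_⟩
  apply ENNReal.toReal_le_of_le_ofReal (by positivity)
  simpa using hvol
end

section
/- Suppose (γ_u) is a bounded sequence of positive reals with γ_u → γ_∞ at stretched-exponential rate |γ_u − γ_∞| ≤ C e^{−cu^{1/2}}, and (α_j), (β_ℓ) are nonnegative sequences with α_j γ_j ≤ C e^{−cj^{1/2}} and β_ℓ γ_ℓ ≤ C e^{−cℓ^{1/2}}. Define φ_u = Σ_{j+ℓ ≤ u} α_j γ_j β_ℓ γ_ℓ γ_{u−j−ℓ} and φ_∞ = γ_∞ (Σ_j α_j γ_j)(Σ_ℓ β_ℓ γ_ℓ). Then |φ_u − φ_∞| ≤ C' e^{−c' u^{1/2}} for suitable constants C', c' > 0. -/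
/-!
Put `a_j = α_j γ_j`, `b_ℓ = β_ℓ γ_ℓ` and `δ_n = γ_n - γ_∞`. The double sum `φ_u` is the
Cauchy product `((a ⋆ b) ⋆ γ)_u`, and since `∑ (a ⋆ b) = (∑ a)(∑ b)`,
`φ_u - φ_∞ = ((a ⋆ b) ⋆ δ)_u - γ_∞ ∑_{n > u} (a ⋆ b)_n`.
Stretched-exponential decay survives Cauchy products (by subadditivity of `√`, each of the
`n + 1` terms of `(f ⋆ g)_n` is `O(e^{-c√n})`, and the factor `n + 1` costs half the rate)
and passage to tails, which bounds both pieces.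
-/

open Finset Real

lemma sqrt_add_le_sqrt_add_sqrt {x y : ℝ} (hx : 0 ≤ x) (hy : 0 ≤ y) : √(x + y) ≤ √x + √y := by
  rw [sqrt_le_iff]
  refine ⟨by positivity, ?_⟩
  nlinarith [sq_sqrt hx, sq_sqrt hy, mul_nonneg (sqrt_nonneg x) (sqrt_nonneg y)]

lemma exp_neg_mul_sqrt_mul_exp_neg_mul_sqrt_le {c : ℝ} (hc : 0 ≤ c) (m n : ℕ) :
    exp (-c * √m) * exp (-c * √n) ≤ exp (-c * √(m + n : ℕ)) := by
  rw [← exp_add, exp_le_exp, Nat.cast_add]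
  nlinarith [sqrt_add_le_sqrt_add_sqrt m.cast_nonneg n.cast_nonneg]

lemma exp_neg_mul_sqrt_le_of_le {c c' : ℝ} {m n : ℕ} (hc' : 0 ≤ c') (hcc' : c' ≤ c)
    (hmn : m ≤ n) :
    exp (-c * √n) ≤ exp (-c' * √m) := by
  have : √(m : ℝ) ≤ √(n : ℝ) := sqrt_le_sqrt (by exact_mod_cast hmn)
  rw [exp_le_exp]
  nlinarith [sqrt_nonneg (m : ℝ)]

lemma add_one_pow_mul_exp_neg_mul_sqrt_le (k : ℕ) {c : ℝ} (hc : 0 < c) {x : ℝ} (hx : 0 ≤ x) :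
    (x + 1) ^ k * exp (-c * √x) ≤ (2 * k).factorial * exp c / c ^ (2 * k) := by
  have hsq : x + 1 ≤ (√x + 1) ^ 2 := by nlinarith [sq_sqrt hx, sqrt_nonneg x]
  have hexp := pow_div_factorial_le_exp (x := c * (√x + 1)) (by positivity) (2 * k)
  rw [div_le_iff₀ (by positivity), mul_pow] at hexp
  rw [le_div_iff₀ (by positivity)]
  calc (x + 1) ^ k * exp (-c * √x) * c ^ (2 * k)
      ≤ ((√x + 1) ^ 2) ^ k * exp (-c * √x) * c ^ (2 * k) := by gcongr
    _ = c ^ (2 * k) * (√x + 1) ^ (2 * k) * exp (-c * √x) := by rw [← pow_mul]; ring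
    _ ≤ exp (c * (√x + 1)) * (2 * k).factorial * exp (-c * √x) := by gcongr
    _ = (2 * k).factorial * exp c := by rw [mul_right_comm, ← exp_add]; ring_nf

lemma summable_exp_neg_mul_sqrt {c : ℝ} (hc : 0 < c) : Summable fun n : ℕ => exp (-c * √n) := by
  have hinv : Summable fun n : ℕ => 1 / ((n : ℝ) + 1) ^ 2 := by
    simpa using (summable_nat_add_iff 1).mpr (summable_one_div_nat_pow.mpr one_lt_two)
  refine .of_nonneg_of_le (fun n => (exp_pos _).le) (fun n => ?_)
    (hinv.mul_left ((2 * 2).factorial * exp c / c ^ (2 * 2)))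
  rw [← div_eq_mul_one_div, le_div_iff₀ (by positivity), mul_comm]
  exact add_one_pow_mul_exp_neg_mul_sqrt_le 2 hc n.cast_nonneg

def HasStretchedExpDecay (f : ℕ → ℝ) : Prop :=
  ∃ C : ℝ, 0 < C ∧ ∃ c : ℝ, 0 < c ∧ ∀ n : ℕ, |f n| ≤ C * exp (-c * √n)

def cauchyProduct (f g : ℕ → ℝ) (n : ℕ) : ℝ :=
  ∑ k ∈ range (n + 1), f k * g (n - k)

lemma PowerSeries.mk_cauchyProduct (f g : ℕ → ℝ) :
    PowerSeries.mk (cauchyProduct f g) = PowerSeries.mk f * PowerSeries.mk g := by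
  ext n
  simp only [PowerSeries.coeff_mk, PowerSeries.coeff_mul,
    Nat.sum_antidiagonal_eq_sum_range_succ fun i j => f i * g j, cauchyProduct]

lemma cauchyProduct_assoc (f g h : ℕ → ℝ) :
    cauchyProduct (cauchyProduct f g) h = cauchyProduct f (cauchyProduct g h) := by
  funext n
  simpa only [PowerSeries.coeff_mk, ← PowerSeries.mk_cauchyProduct] using
    congrArg (PowerSeries.coeff n)
      (mul_assoc (PowerSeries.mk f) (PowerSeries.mk g) (PowerSeries.mk h))

lemma cauchyProduct_eq_cauchyProduct_sub_add (f g : ℕ → ℝ) (x : ℝ) (n : ℕ) :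
    cauchyProduct f g n =
      cauchyProduct f (fun m => g m - x) n + x * ∑ k ∈ range (n + 1), f k := by
  simp only [cauchyProduct, mul_sum, ← sum_add_distrib]
  exact sum_congr rfl fun k _ => by ring

lemma sum_range_sum_range_eq_cauchyProduct (a b g : ℕ → ℝ) (u : ℕ) :
    ∑ j ∈ range (u + 1), ∑ k ∈ range (u + 1 - j), a j * b k * g (u - j - k) =
      cauchyProduct (cauchyProduct a b) g u := by
  rw [cauchyProduct_assoc]
  refine sum_congr rfl fun j hj => ?_
  rw [cauchyProduct, mul_sum, show u + 1 - j = u - j + 1 by have := mem_range.mp hj; omega]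
  exact sum_congr rfl fun k _ => mul_assoc _ _ _

lemma cauchyProduct_sub_mul_tsum_mul_tsum {a b : ℕ → ℝ} (ha : Summable fun n => ‖a n‖)
    (hb : Summable fun n => ‖b n‖) (g : ℕ → ℝ) (x : ℝ) (u : ℕ) :
    cauchyProduct (cauchyProduct a b) g u - x * (∑' j, a j) * ∑' k, b k =
      cauchyProduct (cauchyProduct a b) (fun n => g n - x) u -
        x * ∑' j, cauchyProduct a b (j + (u + 1)) := by
  have hab : HasSum (cauchyProduct a b) ((∑' j, a j) * ∑' k, b k) :=
    hasSum_sum_range_mul_of_summable_norm ha hb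
  rw [cauchyProduct_eq_cauchyProduct_sub_add _ g x, mul_assoc x, ← hab.tsum_eq,
    ← hab.summable.sum_add_tsum_nat_add (u + 1)]
  ring

namespace HasStretchedExpDecay

variable {f g : ℕ → ℝ}

lemma congr (hf : HasStretchedExpDecay f) (hfg : ∀ n, f n = g n) : HasStretchedExpDecay g := by
  rwa [← funext hfg]

lemma summable_abs (hf : HasStretchedExpDecay f) : Summable fun n => |f n| := by
  obtain ⟨C, -, c, hc, hfC⟩ := hf
  exact .of_nonneg_of_le (fun n => abs_nonneg _) hfC ((summable_exp_neg_mul_sqrt hc).mul_left C)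

lemma comp_succ (hf : HasStretchedExpDecay f) : HasStretchedExpDecay fun n => f (n + 1) := by
  obtain ⟨C, hC, c, hc, hfC⟩ := hf
  refine ⟨C, hC, c, hc, fun n => (hfC (n + 1)).trans ?_⟩
  gcongr C * ?_
  exact exp_neg_mul_sqrt_le_of_le hc.le le_rfl n.le_succ

lemma const_mul (hf : HasStretchedExpDecay f) (x : ℝ) : HasStretchedExpDecay fun n => x * f n := by
  obtain ⟨C, hC, c, hc, hfC⟩ := hf
  refine ⟨(|x| + 1) * C, by positivity, c, hc, fun n => ?_⟩
  rw [abs_mul, mul_assoc]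
  exact mul_le_mul (by linarith) (hfC n) (abs_nonneg _) (by positivity)

lemma sub (hf : HasStretchedExpDecay f) (hg : HasStretchedExpDecay g) :
    HasStretchedExpDecay fun n => f n - g n := by
  obtain ⟨C₁, hC₁, c₁, hc₁, hfC⟩ := hf
  obtain ⟨C₂, hC₂, c₂, hc₂, hgC⟩ := hg
  have hc : 0 < min c₁ c₂ := lt_min hc₁ hc₂
  refine ⟨C₁ + C₂, by positivity, min c₁ c₂, hc, fun n => ?_⟩
  calc |f n - g n| ≤ |f n| + |g n| := abs_sub _ _
    _ ≤ C₁ * exp (-c₁ * √n) + C₂ * exp (-c₂ * √n) := add_le_add (hfC n) (hgC n)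
    _ ≤ C₁ * exp (-min c₁ c₂ * √n) + C₂ * exp (-min c₁ c₂ * √n) := by
      gcongr C₁ * ?_ + C₂ * ?_
      · exact exp_neg_mul_sqrt_le_of_le hc.le (min_le_left _ _) le_rfl
      · exact exp_neg_mul_sqrt_le_of_le hc.le (min_le_right _ _) le_rfl
    _ = (C₁ + C₂) * exp (-min c₁ c₂ * √n) := by ring

lemma cauchyProduct (hf : HasStretchedExpDecay f) (hg : HasStretchedExpDecay g) :
    HasStretchedExpDecay (_root_.cauchyProduct f g) := by
  obtain ⟨C₁, hC₁, c₁, hc₁, hfC⟩ := hf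
  obtain ⟨C₂, hC₂, c₂, hc₂, hgC⟩ := hg
  set c := min c₁ c₂
  have hc : 0 < c := lt_min hc₁ hc₂
  have hfc : ∀ k, |f k| ≤ C₁ * exp (-c * √k) := fun k =>
    (hfC k).trans (by gcongr C₁ * ?_; exact exp_neg_mul_sqrt_le_of_le hc.le (min_le_left _ _) le_rfl)
  have hgc : ∀ k, |g k| ≤ C₂ * exp (-c * √k) := fun k =>
    (hgC k).trans (by gcongr C₂ * ?_; exact exp_neg_mul_sqrt_le_of_le hc.le (min_le_right _ _) le_rfl)
  have hterm : ∀ n, ∀ k ∈ range (n + 1), |f k * g (n - k)| ≤ C₁ * C₂ * exp (-c * √n) := by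
    intro n k hk
    have hkn : k + (n - k) = n := by have := mem_range.mp hk; omega
    calc |f k * g (n - k)| ≤ C₁ * exp (-c * √k) * (C₂ * exp (-c * √(n - k : ℕ))) := by
          rw [abs_mul]
          exact mul_le_mul (hfc k) (hgc _) (abs_nonneg _) (by positivity)
      _ ≤ C₁ * C₂ * exp (-c * √n) := by
          rw [mul_mul_mul_comm]
          gcongr
          simpa only [hkn] using exp_neg_mul_sqrt_mul_exp_neg_mul_sqrt_le hc.le k (n - k)
  refine ⟨C₁ * C₂ * ((2 * 1).factorial * exp (c / 2) / (c / 2) ^ (2 * 1)), by positivity,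
    c / 2, by positivity, fun n => ?_⟩
  have hsplit : exp (-c * √n) = exp (-(c / 2) * √n) * exp (-(c / 2) * √n) := by
    rw [← exp_add]; ring_nf
  calc |_root_.cauchyProduct f g n| ≤ ∑ k ∈ range (n + 1), |f k * g (n - k)| :=
        abs_sum_le_sum_abs _ _
    _ ≤ ∑ k ∈ range (n + 1), C₁ * C₂ * exp (-c * √n) := sum_le_sum (hterm n)
    _ = C₁ * C₂ * (((n : ℝ) + 1) ^ 1 * exp (-(c / 2) * √n)) * exp (-(c / 2) * √n) := by
      rw [sum_const, card_range, nsmul_eq_mul, hsplit]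
      push_cast
      ring
    _ ≤ _ := by
      gcongr
      exact add_one_pow_mul_exp_neg_mul_sqrt_le 1 (half_pos hc) n.cast_nonneg

lemma tsum_tail (hf : HasStretchedExpDecay f) :
    HasStretchedExpDecay fun m => ∑' j, f (j + m) := by
  obtain ⟨C, hC, c, hc, hfC⟩ := hf
  have hc2 : 0 < c / 2 := half_pos hc
  have hS := summable_exp_neg_mul_sqrt hc2
  refine ⟨C * ∑' j : ℕ, exp (-(c / 2) * √j),
    mul_pos hC (hS.tsum_pos (fun _ => (exp_pos _).le) 0 (exp_pos _)), c / 2, hc2, fun m => ?_⟩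
  rw [← Real.norm_eq_abs, mul_right_comm, ← tsum_mul_left]
  refine tsum_of_norm_bounded (hS.mul_left _).hasSum fun j => (hfC (j + m)).trans ?_
  rw [mul_assoc, mul_comm (exp _)]
  gcongr C * ?_
  calc exp (-c * √(j + m : ℕ))
        = exp (-(c / 2) * √(j + m : ℕ)) * exp (-(c / 2) * √(j + m : ℕ)) := by
        rw [← exp_add]; ring_nf
    _ ≤ exp (-(c / 2) * √j) * exp (-(c / 2) * √m) :=
        mul_le_mul (exp_neg_mul_sqrt_le_of_le hc2.le le_rfl (Nat.le_add_right j m))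
          (exp_neg_mul_sqrt_le_of_le hc2.le le_rfl (Nat.le_add_left m j))
          (exp_pos _).le (exp_pos _).le

end HasStretchedExpDecay

theorem convolution_asymptotics_general
    (γ : ℕ → ℝ) (γinf : ℝ) (α β : ℕ → ℝ) (C c : ℝ) (hC : 0 < C) (hc : 0 < c)
    (hγpos : ∀ u, 0 < γ u)
    (hγlim : ∀ u : ℕ, |γ u - γinf| ≤ C * Real.exp (-c * Real.sqrt u))
    (hα : ∀ j, 0 ≤ α j) (hβ : ∀ j, 0 ≤ β j)
    (hαγ : ∀ j : ℕ, α j * γ j ≤ C * Real.exp (-c * Real.sqrt j))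
    (hβγ : ∀ j : ℕ, β j * γ j ≤ C * Real.exp (-c * Real.sqrt j)) :
    ∃ C' : ℝ, 0 < C' ∧ ∃ c' : ℝ, 0 < c' ∧ ∀ u : ℕ,
      |(∑ j ∈ Finset.range (u + 1), ∑ k ∈ Finset.range (u + 1 - j),
          α j * γ j * (β k * γ k) * γ (u - j - k)) -
        γinf * (∑' j : ℕ, α j * γ j) * (∑' k : ℕ, β k * γ k)| ≤
      C' * Real.exp (-c' * Real.sqrt u) := by
  have ha : HasStretchedExpDecay fun j => α j * γ j :=
    ⟨C, hC, c, hc, fun j => (abs_of_nonneg (mul_nonneg (hα j) (hγpos j).le)).trans_le (hαγ j)⟩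
  have hb : HasStretchedExpDecay fun k => β k * γ k :=
    ⟨C, hC, c, hc, fun k => (abs_of_nonneg (mul_nonneg (hβ k) (hγpos k).le)).trans_le (hβγ k)⟩
  have hδ : HasStretchedExpDecay fun n => γ n - γinf := ⟨C, hC, c, hc, hγlim⟩
  have hab := ha.cauchyProduct hb
  refine ((hab.cauchyProduct hδ).sub (hab.tsum_tail.comp_succ.const_mul γinf)).congr fun u => ?_
  rw [sum_range_sum_range_eq_cauchyProduct,
    cauchyProduct_sub_mul_tsum_mul_tsum ha.summable_abs hb.summable_abs]

theorem convolution_asymptotics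
    (γ : ℕ → ℝ) (γinf : ℝ) (α β : ℕ → ℝ) (C c : ℝ) (hC : 0 < C) (hc : 0 < c)
    (hγpos : ∀ u, 0 < γ u) (hγbdd : ∃ bnd : ℝ, ∀ u, γ u ≤ bnd)
    (hγlim : ∀ u : ℕ, |γ u - γinf| ≤ C * Real.exp (-c * Real.sqrt u))
    (hα : ∀ j, 0 ≤ α j) (hβ : ∀ j, 0 ≤ β j)
    (hαγ : ∀ j : ℕ, α j * γ j ≤ C * Real.exp (-c * Real.sqrt j))
    (hβγ : ∀ j : ℕ, β j * γ j ≤ C * Real.exp (-c * Real.sqrt j)) :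
    ∃ C' : ℝ, 0 < C' ∧ ∃ c' : ℝ, 0 < c' ∧ ∀ u : ℕ,
      |(∑ j ∈ Finset.range (u + 1), ∑ k ∈ Finset.range (u + 1 - j),
          α j * γ j * (β k * γ k) * γ (u - j - k)) -
        γinf * (∑' j : ℕ, α j * γ j) * (∑' k : ℕ, β k * γ k)| ≤
      C' * Real.exp (-c' * Real.sqrt u) :=
  convolution_asymptotics_general γ γinf α β C c hC hc hγpos hγlim hα hβ hαγ hβγ
end
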